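/- arXiv:1204.3810 — 3 statements merged into one kernel-verified Lean document; each statement's English description precedes it below -/
import Mathlib

section
/- Let f: D → ℝⁿ (D ⊂ ℝⁿ a domain, n ≥ 2) be a continuous mapping that is differentiable almost everywhere in D and has the N-property and the N⁻¹-property. Then there is a countable collection of compact sets C*_k ⊂ D, k = 1, 2, …, such that the set B₀ = D \ ⋃_{k=1}^∞ C*_k has Lebesgue measure zero, the restriction f|_{C*_k} is one-to-one and bi-Lipschitz for every k, and moreover f is differentiable at every point of each C*_k with J(x,f) ≠ 0 there. -/
open MeasureTheory ENNReal Set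

noncomputable section
open scoped Classical

/-- A closed curve in `ℝⁿ`: a continuous map defined on a compact interval `[a, b]`. -/
structure Curve (n : ℕ) where
  a : ℝ
  b : ℝ
  hab : a ≤ b
  toFun : ℝ → EuclideanSpace ℝ (Fin n)
  cont : ContinuousOn toFun (Set.Icc a b)

namespace Curve

variable {n : ℕ}

/-- The length of a curve, as an extended nonnegative real. -/
def eLength (γ : Curve n) : ℝ≥0∞ := eVariationOn γ.toFun (Set.Icc γ.a γ.b)

/-- A curve is rectifiable if it has finite length. -/
def Rectifiable (γ : Curve n) : Prop := γ.eLength ≠ ⊤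

/-- The (real-valued) length of a curve. -/
def length (γ : Curve n) : ℝ := γ.eLength.toReal

/-- The length function `l_γ(t)`: the length of `γ|_[a,t]`. -/
def lengthFun (γ : Curve n) (t : ℝ) : ℝ := (eVariationOn γ.toFun (Set.Icc γ.a t)).toReal

/-- The normal representation `γ⁰ : [0, l(γ)] → ℝⁿ` of a (rectifiable) curve,
the arclength reparametrization satisfying `γ = γ⁰ ∘ l_γ`. -/
def normalRep (γ : Curve n) (s : ℝ) : EuclideanSpace ℝ (Fin n) :=
  γ.toFun (sInf {t | t ∈ Set.Icc γ.a γ.b ∧ γ.lengthFun t = s})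

/-- A curve lies in a set `D`. -/
def InSet (γ : Curve n) (D : Set (EuclideanSpace ℝ (Fin n))) : Prop :=
  ∀ t ∈ Set.Icc γ.a γ.b, γ.toFun t ∈ D

end Curve

variable {n : ℕ}

/-- The line integral `∫_γ ρ |dx|` of a nonnegative Borel function over a curve,
computed through the normal representation. -/
def lineIntegral (ρ : EuclideanSpace ℝ (Fin n) → ℝ≥0∞) (γ : Curve n) : ℝ≥0∞ :=
  ∫⁻ t in Set.Icc (0 : ℝ) γ.length, ρ (γ.normalRep t)

/-- `ρ` is admissible for the curve family `Γ`: it is Borel and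
`∫_γ ρ |dx| ≥ 1` for every (locally) rectifiable curve of the family. -/
def Admissible (ρ : EuclideanSpace ℝ (Fin n) → ℝ≥0∞) (Γ : Set (Curve n)) : Prop :=
  Measurable ρ ∧ ∀ γ ∈ Γ, γ.Rectifiable → 1 ≤ lineIntegral ρ γ

/-- The `p`-modulus `M_p(Γ)` of a family of curves. -/
def modulus (p : ℝ) (Γ : Set (Curve n)) : ℝ≥0∞ :=
  ⨅ (ρ : EuclideanSpace ℝ (Fin n) → ℝ≥0∞) (_ : Admissible ρ Γ), ∫⁻ x, ρ x ^ p

/-- The image family `f(Γ)`: curves obtained by composing curves of `Γ` with `f`. -/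
def pushforward (f : EuclideanSpace ℝ (Fin n) → EuclideanSpace ℝ (Fin n))
    (Γ : Set (Curve n)) : Set (Curve n) :=
  {β | ∃ γ ∈ Γ, β.a = γ.a ∧ β.b = γ.b ∧ ∀ t ∈ Set.Icc γ.a γ.b, β.toFun t = f (γ.toFun t)}

/-- `l(A) = inf_{|h| = 1} |A h|`. -/
def minNorm (A : EuclideanSpace ℝ (Fin n) →L[ℝ] EuclideanSpace ℝ (Fin n)) : ℝ :=
  sInf ((fun h => ‖A h‖) '' {h | ‖h‖ = 1})

/-- The inner dilatation of order `p` of a linear map `A`: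
`|det A| / l(A)^p` if `det A ≠ 0`, `1` if `A = 0`, and `∞` otherwise. -/
def innerDilatation (p : ℝ)
    (A : EuclideanSpace ℝ (Fin n) →L[ℝ] EuclideanSpace ℝ (Fin n)) : ℝ≥0∞ :=
  if A.det ≠ 0 then ENNReal.ofReal (|A.det| / minNorm A ^ p)
  else if A = 0 then 1 else ⊤

/-- `K_{I,p}(x, f)`, the inner dilatation of order `p` of `f` at `x`. -/
def KIp (p : ℝ) (f : EuclideanSpace ℝ (Fin n) → EuclideanSpace ℝ (Fin n))
    (x : EuclideanSpace ℝ (Fin n)) : ℝ≥0∞ :=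
  innerDilatation p (fderiv ℝ f x)

/-- Luzin's `N`-property on `D`. -/
def NProp (f : EuclideanSpace ℝ (Fin n) → EuclideanSpace ℝ (Fin n))
    (D : Set (EuclideanSpace ℝ (Fin n))) : Prop :=
  ∀ S ⊆ D, volume S = 0 → volume (f '' S) = 0

/-- The `N⁻¹`-property on `D`. -/
def NInvProp (f : EuclideanSpace ℝ (Fin n) → EuclideanSpace ℝ (Fin n))
    (D : Set (EuclideanSpace ℝ (Fin n))) : Prop :=
  ∀ S : Set (EuclideanSpace ℝ (Fin n)), volume S = 0 → volume (D ∩ f ⁻¹' S) = 0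

/-- `f` is discrete on `D`: each fiber consists of isolated points. -/
def DiscreteMap (f : EuclideanSpace ℝ (Fin n) → EuclideanSpace ℝ (Fin n))
    (D : Set (EuclideanSpace ℝ (Fin n))) : Prop :=
  ∀ y, ∀ x ∈ D, f x = y → ∃ ε > 0, ∀ z ∈ Metric.ball x ε ∩ D, f z = y → z = x

/-- Absolute continuity of `g` on `[a, b]`. -/
def AbsContOn (g : ℝ → EuclideanSpace ℝ (Fin n)) (a b : ℝ) : Prop :=
  ∀ ε > 0, ∃ δ > 0, ∀ (k : ℕ) (u v : ℕ → ℝ),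
    (∀ i < k, a ≤ u i ∧ u i ≤ v i ∧ v i ≤ b) →
    (∀ i < k, ∀ j < k, i ≠ j → Disjoint (Set.Ioo (u i) (v i)) (Set.Ioo (u j) (v j))) →
    (∑ i ∈ Finset.range k, (v i - u i)) < δ →
    (∑ i ∈ Finset.range k, ‖g (v i) - g (u i)‖) < ε

/-- The `ACP_p⁻¹` property: for `p`-a.e. closed curve `β` in `f(D)`, every lifting `γ` of `β`
in `D` is rectifiable and its `f`-representation is absolutely continuous. -/
def ACPinv (p : ℝ) (f : EuclideanSpace ℝ (Fin n) → EuclideanSpace ℝ (Fin n))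
    (D : Set (EuclideanSpace ℝ (Fin n))) : Prop :=
  modulus p {β : Curve n | β.InSet (f '' D) ∧
    ¬ ∀ γ : Curve n, γ.a = β.a → γ.b = β.b → γ.InSet D →
        (∀ t ∈ Set.Icc γ.a γ.b, f (γ.toFun t) = β.toFun t) →
        γ.Rectifiable ∧ ∃ αs : ℝ → EuclideanSpace ℝ (Fin n),
          (∀ t ∈ Set.Icc γ.a γ.b, γ.toFun t = αs (β.lengthFun t)) ∧
          AbsContOn αs 0 β.length} = 0

/-- `f` winds the closed curve `α` `m` times around itself. -/
def Winds (f : EuclideanSpace ℝ (Fin n) → EuclideanSpace ℝ (Fin n)) (m : ℕ)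
    (α : Curve n) : Prop :=
  ∃ β : Curve n, β.a = α.a ∧ β.b = α.b ∧
    (∀ t ∈ Set.Icc α.a α.b, β.toFun t = f (α.toFun t)) ∧ β.Rectifiable ∧
    ∃ αs : ℝ → EuclideanSpace ℝ (Fin n),
      (∀ t ∈ Set.Icc α.a α.b, α.toFun t = αs (β.lengthFun t)) ∧
      ∀ (t : ℝ) (j : ℕ), 0 ≤ t → 1 ≤ j → j ≤ m - 1 →
        t + j * (β.length / m) < β.length →
        β.normalRep (t + j * (β.length / m)) = β.normalRep t ∧
        αs (t + j * (β.length / m)) ≠ αs t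

/-- `f` is bi-Lipschitz on the set `S`. -/
def BiLipschitzOn (f : EuclideanSpace ℝ (Fin n) → EuclideanSpace ℝ (Fin n))
    (S : Set (EuclideanSpace ℝ (Fin n))) : Prop :=
  ∃ M M' : ℝ, 0 < M' ∧
    (∀ x ∈ S, ∀ y ∈ S, dist (f x) (f y) ≤ M * dist x y) ∧
    (∀ x ∈ S, ∀ y ∈ S, M' * dist x y ≤ dist (f x) (f y))

/-- Encoding of `f ∈ W^{1,n}_loc(D)`: `f` is differentiable a.e. in `D` and its derivative is
locally `n`-integrable on `D` (Mathlib does not yet have Sobolev spaces). -/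
def MemW1nLoc (n' : ℕ) (f : EuclideanSpace ℝ (Fin n) → EuclideanSpace ℝ (Fin n))
    (D : Set (EuclideanSpace ℝ (Fin n))) : Prop :=
  (∀ᵐ x ∂(volume.restrict D), DifferentiableAt ℝ f x) ∧
  LocallyIntegrableOn (fun x => ‖fderiv ℝ f x‖ ^ n') D volume

/-- `f` is a mapping with bounded distortion (constant `K`) on the domain `D`. -/
def BoundedDistortion (K : ℝ) (f : EuclideanSpace ℝ (Fin n) → EuclideanSpace ℝ (Fin n))
    (D : Set (EuclideanSpace ℝ (Fin n))) : Prop :=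
  ContinuousOn f D ∧ MemW1nLoc n f D ∧
  ((∀ᵐ x ∂(volume.restrict D), 0 ≤ (fderiv ℝ f x).det) ∨
   (∀ᵐ x ∂(volume.restrict D), (fderiv ℝ f x).det ≤ 0)) ∧
  (∀ᵐ x ∂(volume.restrict D), ‖fderiv ℝ f x‖ ^ n ≤ K * |(fderiv ℝ f x).det|)

end

open scoped NNReal

/-- Helper: any measurable subset of `ℝⁿ` can be covered, up to measure zero, by countably
many compact subsets. -/
lemma exists_compact_family_aux {n : ℕ} (T : Set (EuclideanSpace ℝ (Fin n)))
    (hT : MeasurableSet T) :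
    ∃ K : ℕ → Set (EuclideanSpace ℝ (Fin n)),
      (∀ j, IsCompact (K j)) ∧ (∀ j, K j ⊆ T) ∧ volume (T \ ⋃ j, K j) = 0 := by
  classical
  have key : ∀ m j : ℕ, ∃ K, K ⊆ T ∩ Metric.closedBall 0 m ∧ IsCompact K ∧
      volume ((T ∩ Metric.closedBall 0 m) \ K) < ((j : ℝ≥0∞) + 1)⁻¹ := by
    intro m j
    refine (hT.inter measurableSet_closedBall).exists_isCompact_diff_lt ?_ ?_
    · exact (lt_of_le_of_lt (measure_mono inter_subset_right)
        measure_closedBall_lt_top).ne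
    · simp [ENNReal.inv_ne_zero]
  choose K hKsub hKcomp hKlt using key
  set F : ℕ × ℕ → Set (EuclideanSpace ℝ (Fin n)) := fun p => K p.1 p.2 with hF
  set e : ℕ → ℕ × ℕ := fun k => (Denumerable.eqv (ℕ × ℕ)).symm k with he
  refine ⟨fun k => F (e k), fun k => hKcomp _ _, fun k => (hKsub _ _).trans inter_subset_left, ?_⟩
  have hUnion : ⋃ k, F (e k) = ⋃ p, F p :=
    (Denumerable.eqv (ℕ × ℕ)).symm.surjective.iUnion_comp F
  rw [hUnion]
  have hmzero : ∀ m : ℕ, volume ((T ∩ Metric.closedBall 0 m) \ ⋃ j, K m j) = 0 := by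
    intro m
    by_contra h
    obtain ⟨j, hj⟩ := ENNReal.exists_inv_nat_lt h
    have h1 : volume ((T ∩ Metric.closedBall 0 m) \ ⋃ j', K m j') ≤
        volume ((T ∩ Metric.closedBall 0 m) \ K m j) :=
      measure_mono (diff_subset_diff_right (subset_iUnion _ j))
    have h2 : ((j : ℝ≥0∞) + 1)⁻¹ ≤ ((j : ℝ≥0∞))⁻¹ :=
      ENNReal.inv_le_inv.2 (le_add_of_nonneg_right zero_le_one)
    exact absurd (h1.trans (hKlt m j).le) (by exact fun hle => (hle.trans h2).not_gt hj)
  refine measure_mono_null ?_ (measure_iUnion_null hmzero)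
  intro x hx
  obtain ⟨m, hm⟩ := exists_nat_ge ‖x‖
  refine mem_iUnion.2 ⟨m, ⟨⟨hx.1, ?_⟩, ?_⟩⟩
  · simpa [Metric.mem_closedBall, dist_eq_norm] using hm
  · intro hxu
    obtain ⟨j, hj⟩ := mem_iUnion.1 hxu
    exact hx.2 (mem_iUnion.2 ⟨(m, j), hj⟩)

/-- Helper: the inverse of a continuous linear equivalence on a nontrivial normed space has
nonzero norm. -/
lemma symm_nnnorm_ne_zero {E : Type*} [NormedAddCommGroup E] [NormedSpace ℝ E] [Nontrivial E]
    (B : E ≃L[ℝ] E) : ‖(B.symm : E →L[ℝ] E)‖₊ ≠ 0 := by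
  intro h0
  have hz : (B.symm : E →L[ℝ] E) = 0 := by
    rwa [nnnorm_eq_zero] at h0
  obtain ⟨v, hv⟩ := exists_ne (0 : E)
  apply hv
  have : (B.symm : E →L[ℝ] E) (B v) = v := B.symm_apply_apply v
  rw [hz] at this
  simpa using this.symm

/-- **Proposition 1.** Let `f : D → ℝⁿ` (`n ≥ 2`, `D` a domain) be continuous, differentiable
a.e. in `D`, with the `N` and `N⁻¹` properties. Then there is a countable collection of compact
sets `C*_k ⊂ D` such that `B₀ = D \ ⋃ₖ C*_k` has measure zero, `f|_{C*_k}` is one-to-one and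
bi-Lipschitz for every `k`, and `f` is differentiable at every point of each `C*_k` with
`J(x, f) ≠ 0` there. -/
theorem countable_bilipschitz_decomposition
    {n : ℕ} (hn : 2 ≤ n) (D : Set (EuclideanSpace ℝ (Fin n)))
    (hDopen : IsOpen D) (hDconn : IsConnected D)
    (f : EuclideanSpace ℝ (Fin n) → EuclideanSpace ℝ (Fin n))
    (hf : ContinuousOn f D)
    (hdiff : ∀ᵐ x ∂(volume.restrict D), DifferentiableAt ℝ f x)
    (hN : NProp f D) (hNinv : NInvProp f D) :
    ∃ C : ℕ → Set (EuclideanSpace ℝ (Fin n)),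
      (∀ k, IsCompact (C k)) ∧ (∀ k, C k ⊆ D) ∧
      volume (D \ ⋃ k, C k) = 0 ∧
      (∀ k, Set.InjOn f (C k)) ∧ (∀ k, BiLipschitzOn f (C k)) ∧
      ∀ k, ∀ x ∈ C k, DifferentiableAt ℝ f x ∧ (fderiv ℝ f x).det ≠ 0 := by
  classical
  haveI : Nonempty (Fin n) := ⟨⟨0, by omega⟩⟩
  have hDm : MeasurableSet D := hDopen.measurableSet
  have hGm : MeasurableSet {x : EuclideanSpace ℝ (Fin n) | DifferentiableAt ℝ f x} := measurableSet_of_differentiableAt ℝ f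
  have hdet_meas : Measurable fun x : EuclideanSpace ℝ (Fin n) => (fderiv ℝ f x).det :=
    ContinuousLinearMap.continuous_det.measurable.comp (measurable_fderiv ℝ f)
  have hdetm : MeasurableSet {x : EuclideanSpace ℝ (Fin n) | (fderiv ℝ f x).det ≠ 0} := by
    have : MeasurableSet ((fun x : EuclideanSpace ℝ (Fin n) => (fderiv ℝ f x).det) ⁻¹' ({0}ᶜ)) :=
      hdet_meas (measurableSet_singleton (0 : ℝ)).compl
    simpa [Set.preimage, Set.mem_compl_iff] using this
  set S : Set (EuclideanSpace ℝ (Fin n)) := D ∩ ({x | DifferentiableAt ℝ f x} ∩ {x | (fderiv ℝ f x).det ≠ 0}) with hSdef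
  have hSm : MeasurableSet S := hDm.inter (hGm.inter hdetm)
  have hSD : S ⊆ D := inter_subset_left
  -- the non-differentiability set has measure zero
  have hDiffZero : volume ({x : EuclideanSpace ℝ (Fin n) | ¬ DifferentiableAt ℝ f x} ∩ D) = 0 := by
    have h1 : (volume.restrict D) {x : EuclideanSpace ℝ (Fin n) | ¬ DifferentiableAt ℝ f x} = 0 := by
      rw [← compl_setOf] at *
      exact (ae_iff.1 hdiff)
    rwa [Measure.restrict_apply' hDm] at h1
  -- the zero-Jacobian set has measure zero (using Sard + N⁻¹)
  set Z : Set (EuclideanSpace ℝ (Fin n)) := {x | x ∈ D ∧ DifferentiableAt ℝ f x ∧ (fderiv ℝ f x).det = 0} with hZdef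
  have hZimg : volume (f '' Z) = 0 := by
    apply addHaar_image_eq_zero_of_det_fderivWithin_eq_zero volume
      (f' := fun x => fderiv ℝ f x)
    · intro x hx
      exact hx.2.1.hasFDerivAt.hasFDerivWithinAt
    · intro x hx
      exact hx.2.2
  have hZ : volume Z = 0 := by
    refine measure_mono_null ?_ (hNinv (f '' Z) hZimg)
    intro x hx
    exact ⟨hx.1, mem_image_of_mem f hx⟩
  have hDS : volume (D \ S) = 0 := by
    refine measure_mono_null ?_
      (measure_union_null hDiffZero hZ)
    intro x hx
    rcases hx with ⟨hxD, hxS⟩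
    by_cases hd : DifferentiableAt ℝ f x
    · right
      refine ⟨hxD, hd, ?_⟩
      by_contra hne
      exact hxS ⟨hxD, hd, hne⟩
    · left; exact ⟨hd, hxD⟩
  -- choose the scale function for the linear approximation
  set r : (EuclideanSpace ℝ (Fin n) →L[ℝ] EuclideanSpace ℝ (Fin n)) → NNReal := fun A =>
    if h : A.det ≠ 0 then
      ‖((A.toContinuousLinearEquivOfDetNeZero h).symm : EuclideanSpace ℝ (Fin n) →L[ℝ] EuclideanSpace ℝ (Fin n))‖₊⁻¹ / 2
    else 1 with hr
  have rpos : ∀ A, r A ≠ 0 := by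
    intro A
    simp only [hr]
    split_ifs with h
    · have := symm_nnnorm_ne_zero (A.toContinuousLinearEquivOfDetNeZero h)
      positivity
    · exact one_ne_zero
  have hf' : ∀ x ∈ S, HasFDerivWithinAt f (fderiv ℝ f x) S x := fun x hx =>
    hx.2.1.hasFDerivAt.hasFDerivWithinAt
  obtain ⟨t, A, -, htm, hcover, happrox, hAval⟩ :=
    exists_partition_approximatesLinearOn_of_hasFDerivWithinAt f S
      (fun x => fderiv ℝ f x) hf' r rpos
  by_cases hSne : S.Nonempty
  swap
  · -- degenerate case: S is empty, so D has measure zero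
    have hSempty : S = ∅ := not_nonempty_iff_eq_empty.1 hSne
    have hDzero : volume D = 0 := by
      have : D \ S = D := by rw [hSempty]; simp
      rw [← this]; exact hDS
    refine ⟨fun _ => ∅, fun _ => isCompact_empty, fun _ => empty_subset _, ?_, ?_, ?_, ?_⟩
    · exact measure_mono_null diff_subset hDzero
    · intro k; exact fun x hx => absurd hx (notMem_empty x)
    · intro k
      exact ⟨1, 1, one_pos, fun x hx => absurd hx (notMem_empty x),
        fun x hx => absurd hx (notMem_empty x)⟩
    · intro k x hx; exact absurd hx (notMem_empty x)
  -- main case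
  have hdet : ∀ m, (A m).det ≠ 0 := by
    intro m
    obtain ⟨y, hy, hAy⟩ := hAval hSne m
    rw [hAy]
    exact hy.2.2
  -- compact exhaustion of each piece
  have hexh := fun m => exists_compact_family_aux (S ∩ t m) (hSm.inter (htm m))
  choose K hKcomp hKsub hKnull using hexh
  set e : ℕ → ℕ × ℕ := fun k => (Denumerable.eqv (ℕ × ℕ)).symm k with he
  set C : ℕ → Set (EuclideanSpace ℝ (Fin n)) := fun k => K (e k).1 (e k).2 with hC
  have hCsub : ∀ k, C k ⊆ S ∩ t (e k).1 := fun k => hKsub _ _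
  have hCS : ∀ k, C k ⊆ S := fun k => (hCsub k).trans inter_subset_left
  -- bi-Lipschitz data for each piece
  have piece : ∀ m : ℕ, ∃ M M' : ℝ, 0 < M' ∧
      (∀ x ∈ S ∩ t m, ∀ y ∈ S ∩ t m, dist (f x) (f y) ≤ M * dist x y) ∧
      (∀ x ∈ S ∩ t m, ∀ y ∈ S ∩ t m, M' * dist x y ≤ dist (f x) (f y)) := by
    intro m
    set B := (A m).toContinuousLinearEquivOfDetNeZero (hdet m) with hB
    set N : NNReal := ‖(B.symm : EuclideanSpace ℝ (Fin n) →L[ℝ] EuclideanSpace ℝ (Fin n))‖₊ with hN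
    have hN0 : N ≠ 0 := symm_nnnorm_ne_zero B
    have hrval : r (A m) = N⁻¹ / 2 := by simp only [hr]; rw [dif_pos (hdet m)]
    have hcltN : r (A m) < N⁻¹ := by
      rw [hrval]
      exact NNReal.half_lt_self (by simpa using hN0)
    have happ : ApproximatesLinearOn f (B : EuclideanSpace ℝ (Fin n) →L[ℝ] EuclideanSpace ℝ (Fin n)) (S ∩ t m) (r (A m)) := by
      rw [hB, ContinuousLinearMap.coe_toContinuousLinearEquivOfDetNeZero]
      exact happrox m
    have antilip : AntilipschitzWith (N⁻¹ - r (A m))⁻¹ ((S ∩ t m).restrict f) :=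
      happ.antilipschitz (Or.inr hcltN)
    have lip : LipschitzWith (‖(A m)‖₊ + r (A m)) ((S ∩ t m).restrict f) :=
      (happrox m).lipschitz
    set κ : NNReal := (N⁻¹ - r (A m))⁻¹ with hκ
    refine ⟨((‖(A m)‖₊ + r (A m)) : NNReal), ((κ : ℝ) + 1)⁻¹, by positivity, ?_, ?_⟩
    · intro x hx y hy
      have := lip.dist_le_mul ⟨x, hx⟩ ⟨y, hy⟩
      simpa [Subtype.dist_eq, Set.restrict] using this
    · intro x hx y hy
      have h1 : dist x y ≤ (κ : ℝ) * dist (f x) (f y) := by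
        have := antilip.le_mul_dist ⟨x, hx⟩ ⟨y, hy⟩
        simpa [Subtype.dist_eq, Set.restrict] using this
      have hκpos : (0 : ℝ) < (κ : ℝ) + 1 := by positivity
      rw [inv_mul_le_iff₀ hκpos]
      have hd : (0 : ℝ) ≤ dist (f x) (f y) := dist_nonneg
      nlinarith
  choose M M' hM'pos hMlip hM'lip using piece
  refine ⟨C, fun k => hKcomp _ _, fun k => (hCS k).trans hSD, ?_, ?_, ?_, ?_⟩
  · -- measure of the complement
    have hUnion : ⋃ k, C k = ⋃ p : ℕ × ℕ, K p.1 p.2 :=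
      (Denumerable.eqv (ℕ × ℕ)).symm.surjective.iUnion_comp (fun p => K p.1 p.2)
    rw [hUnion]
    have hsub : D \ ⋃ p : ℕ × ℕ, K p.1 p.2 ⊆
        (D \ S) ∪ ⋃ m, ((S ∩ t m) \ ⋃ j, K m j) := by
      intro x hx
      by_cases hxS : x ∈ S
      · right
        obtain ⟨m, hm⟩ := mem_iUnion.1 (hcover hxS)
        refine mem_iUnion.2 ⟨m, ⟨⟨hxS, hm⟩, ?_⟩⟩
        intro hxu
        obtain ⟨j, hj⟩ := mem_iUnion.1 hxu
        exact hx.2 (mem_iUnion.2 ⟨(m, j), hj⟩)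
      · left; exact ⟨hx.1, hxS⟩
    exact measure_mono_null hsub
      (measure_union_null hDS (measure_iUnion_null fun m => hKnull m))
  · -- injectivity
    intro k x hx y hy hfxy
    have h1 := hM'lip (e k).1 x (hCsub k hx) y (hCsub k hy)
    rw [hfxy] at h1
    simp only [dist_self] at h1
    have hd0 : dist x y ≤ 0 := by
      by_contra hd
      push_neg at hd
      nlinarith [hM'pos (e k).1]
    exact dist_le_zero.1 hd0
  · -- bi-Lipschitz
    intro k
    exact ⟨M (e k).1, M' (e k).1, hM'pos (e k).1,
      fun x hx y hy => hMlip (e k).1 x (hCsub k hx) y (hCsub k hy),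
      fun x hx y hy => hM'lip (e k).1 x (hCsub k hx) y (hCsub k hy)⟩
  · -- differentiability and nonvanishing Jacobian
    intro k x hx
    exact ⟨(hCS k hx).2.1, (hCS k hx).2.2⟩
end

section
/- Let f: D → ℝⁿ be a continuous mapping such that f⁻¹(y) contains no nondegenerate curve for any y ∈ ℝⁿ. Let β: I₀ → ℝⁿ be a closed rectifiable curve with length function l_β: I₀ → [0, l(β)], and let α: I → D, I ⊂ I₀, be a curve with f∘α a subpath of β. Then there exists a unique function α*: l_β(I) → D such that α = α* ∘ (l_β|_I). -/
open MeasureTheory ENNReal Set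

/-!
If `l_β(t₁) = l_β(t₂)` with `t₁ ≤ t₂`, then `β` has zero variation on `[t₁, t₂]` (this is where
rectifiability enters: lengths are compared after `toReal`), so `β` is constant there. Then
`α|_[t₁, t₂]` is a curve inside a single fibre of `f`, hence constant. So `α` factors through
`l_β` on `I`, and the factor is determined on `l_β(I)` because that set is the image of `l_β`.
-/

section Variation

variable {α E : Type*} [LinearOrder α]

theorem eVariationOn_Icc_eq_zero_of_toReal_eq [PseudoEMetricSpace E] {f : α → E} {a b c : α}
    (hab : a ≤ b) (hbc : b ≤ c) (hc : eVariationOn f (Icc a c) ≠ ⊤)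
    (h : (eVariationOn f (Icc a b)).toReal = (eVariationOn f (Icc a c)).toReal) :
    eVariationOn f (Icc b c) = 0 := by
  have hsplit : eVariationOn f (Icc a b) + eVariationOn f (Icc b c) = eVariationOn f (Icc a c) := by
    simpa only [univ_inter] using eVariationOn.Icc_add_Icc f (s := univ) hab hbc (mem_univ b)
  have hb : eVariationOn f (Icc a b) ≠ ⊤ :=
    ne_top_of_le_ne_top hc (eVariationOn.mono f (Icc_subset_Icc_right hbc))
  rw [(ENNReal.toReal_eq_toReal_iff' hb hc).mp h] at hsplit
  exact (ENNReal.add_right_inj hc).mp (hsplit.trans (add_zero _).symm)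

theorem eqOn_Icc_of_eVariationOn_toReal_eq [EMetricSpace E] {f : α → E} {a b c : α}
    (hab : a ≤ b) (hbc : b ≤ c) (hc : eVariationOn f (Icc a c) ≠ ⊤)
    (h : (eVariationOn f (Icc a b)).toReal = (eVariationOn f (Icc a c)).toReal) :
    EqOn f (fun _ => f b) (Icc b c) := fun t ht =>
  edist_eq_zero.mp <| (eVariationOn.eq_zero_iff f).mp
    (eVariationOn_Icc_eq_zero_of_toReal_eq hab hbc hc h) t ht b ⟨le_rfl, hbc⟩

end Variation

namespace Curve

variable {n : ℕ}

theorem eqOn_Icc_of_lengthFun_eq (γ : Curve n) (hγ : γ.Rectifiable) {t₁ t₂ : ℝ}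
    (ht₁ : γ.a ≤ t₁) (h₁₂ : t₁ ≤ t₂) (ht₂ : t₂ ≤ γ.b) (h : γ.lengthFun t₁ = γ.lengthFun t₂) :
    EqOn γ.toFun (fun _ => γ.toFun t₁) (Icc t₁ t₂) :=
  eqOn_Icc_of_eVariationOn_toReal_eq ht₁ h₁₂
    (ne_top_of_le_ne_top hγ (eVariationOn.mono _ (Icc_subset_Icc_right ht₂))) h

end Curve

def NoNondegenerateCurveInFibers {n : ℕ} (f : EuclideanSpace ℝ (Fin n) → EuclideanSpace ℝ (Fin n))
    (D : Set (EuclideanSpace ℝ (Fin n))) : Prop :=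
  ∀ y : EuclideanSpace ℝ (Fin n), ∀ γ : Curve n, γ.InSet D →
    (∀ t ∈ Icc γ.a γ.b, f (γ.toFun t) = y) → (γ.toFun '' Icc γ.a γ.b).Subsingleton

namespace NoNondegenerateCurveInFibers

variable {n : ℕ} {f : EuclideanSpace ℝ (Fin n) → EuclideanSpace ℝ (Fin n)}
  {D : Set (EuclideanSpace ℝ (Fin n))}

theorem eq_of_mapsTo_fiber (hfib : NoNondegenerateCurveInFibers f D)
    {α : ℝ → EuclideanSpace ℝ (Fin n)} {t₁ t₂ : ℝ} (h₁₂ : t₁ ≤ t₂)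
    (hα : ContinuousOn α (Icc t₁ t₂)) (hαD : MapsTo α (Icc t₁ t₂) D)
    {y : EuclideanSpace ℝ (Fin n)} (hy : ∀ t ∈ Icc t₁ t₂, f (α t) = y) :
    α t₁ = α t₂ :=
  hfib y ⟨t₁, t₂, h₁₂, α, hα⟩ hαD hy (mem_image_of_mem α (left_mem_Icc.mpr h₁₂))
    (mem_image_of_mem α (right_mem_Icc.mpr h₁₂))

theorem factorsThrough_restrict_lengthFun (hfib : NoNondegenerateCurveInFibers f D)
    {β : Curve n} (hβ : β.Rectifiable) {I : Set ℝ} (hI : I ⊆ Icc β.a β.b)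
    (hIint : I.OrdConnected) {α : ℝ → EuclideanSpace ℝ (Fin n)} (hα : ContinuousOn α I)
    (hαD : MapsTo α I D) (hsub : ∀ t ∈ I, f (α t) = β.toFun t) :
    (I.domRestrict α).FactorsThrough (I.domRestrict β.lengthFun) := by
  suffices key : ∀ t₁ ∈ I, ∀ t₂ ∈ I, t₁ ≤ t₂ → β.lengthFun t₁ = β.lengthFun t₂ → α t₁ = α t₂ by
    rintro ⟨t₁, ht₁⟩ ⟨t₂, ht₂⟩ h
    rcases le_total t₁ t₂ with h₁₂ | h₂₁
    · exact key t₁ ht₁ t₂ ht₂ h₁₂ h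
    · exact (key t₂ ht₂ t₁ ht₁ h₂₁ h.symm).symm
  intro t₁ ht₁ t₂ ht₂ h₁₂ h
  have hIcc : Icc t₁ t₂ ⊆ I := hIint.out ht₁ ht₂
  have hβconst := β.eqOn_Icc_of_lengthFun_eq hβ (hI ht₁).1 h₁₂ (hI ht₂).2 h
  exact hfib.eq_of_mapsTo_fiber h₁₂ (hα.mono hIcc) (hαD.mono_left hIcc)
    fun t ht => (hsub t (hIcc ht)).trans (hβconst ht)

end NoNondegenerateCurveInFibers

theorem exists_unique_f_representation_general
    {n : ℕ} (D : Set (EuclideanSpace ℝ (Fin n)))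
    (f : EuclideanSpace ℝ (Fin n) → EuclideanSpace ℝ (Fin n))
    (hfib : ∀ y : EuclideanSpace ℝ (Fin n), ∀ γ : Curve n, γ.InSet D →
      (∀ t ∈ Set.Icc γ.a γ.b, f (γ.toFun t) = y) →
      Set.Subsingleton (γ.toFun '' Set.Icc γ.a γ.b))
    (β : Curve n) (hβ : β.Rectifiable)
    (I : Set ℝ) (hI : I ⊆ Set.Icc β.a β.b) (hIint : I.OrdConnected)
    (α : ℝ → EuclideanSpace ℝ (Fin n)) (hα : ContinuousOn α I)
    (hαD : ∀ t ∈ I, α t ∈ D)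
    (hsub : ∀ t ∈ I, f (α t) = β.toFun t) :
    ∃ αs : ℝ → EuclideanSpace ℝ (Fin n),
      (∀ t ∈ I, α t = αs (β.lengthFun t)) ∧
      (∀ s ∈ β.lengthFun '' I, αs s ∈ D) ∧
      ∀ g : ℝ → EuclideanSpace ℝ (Fin n),
        (∀ t ∈ I, α t = g (β.lengthFun t)) → Set.EqOn g αs (β.lengthFun '' I) := by
  have hfac : (I.domRestrict α).FactorsThrough (I.domRestrict β.lengthFun) :=
    NoNondegenerateCurveInFibers.factorsThrough_restrict_lengthFun hfib hβ hI hIint hα hαD hsub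
  set αs := Function.extend (I.domRestrict β.lengthFun) (I.domRestrict α) fun _ => 0
  have hαs : ∀ t ∈ I, αs (β.lengthFun t) = α t := fun t ht => hfac.extend_apply _ ⟨t, ht⟩
  refine ⟨αs, fun t ht => (hαs t ht).symm, ?_, ?_⟩
  · rintro _ ⟨t, ht, rfl⟩
    exact hαs t ht ▸ hαD t ht
  · rintro g hg _ ⟨t, ht, rfl⟩
    rw [hαs t ht, hg t ht]

/-- **Existence and uniqueness of the `f`-representation.** Let `f : D → ℝⁿ` be continuous and
such that `f⁻¹(y)` contains no nondegenerate curve for any `y`. Let `β` be a closed rectifiable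
curve with length function `l_β`, and let `α : I → D` (`I` a subinterval of the domain of `β`)
be a curve with `f ∘ α` a subpath of `β` (i.e. `f(α(t)) = β(t)` on `I`). Then there is a unique
function `α* : l_β(I) → D` with `α = α* ∘ (l_β|_I)`. -/
theorem exists_unique_f_representation
    {n : ℕ} (D : Set (EuclideanSpace ℝ (Fin n)))
    (f : EuclideanSpace ℝ (Fin n) → EuclideanSpace ℝ (Fin n))
    (hf : ContinuousOn f D)
    (hfib : ∀ y : EuclideanSpace ℝ (Fin n), ∀ γ : Curve n, γ.InSet D →
      (∀ t ∈ Set.Icc γ.a γ.b, f (γ.toFun t) = y) →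
      Set.Subsingleton (γ.toFun '' Set.Icc γ.a γ.b))
    (β : Curve n) (hβ : β.Rectifiable)
    (I : Set ℝ) (hI : I ⊆ Set.Icc β.a β.b) (hIint : I.OrdConnected)
    (α : ℝ → EuclideanSpace ℝ (Fin n)) (hα : ContinuousOn α I)
    (hαD : ∀ t ∈ I, α t ∈ D)
    (hsub : ∀ t ∈ I, f (α t) = β.toFun t) :
    ∃ αs : ℝ → EuclideanSpace ℝ (Fin n),
      (∀ t ∈ I, α t = αs (β.lengthFun t)) ∧
      (∀ s ∈ β.lengthFun '' I, αs s ∈ D) ∧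
      ∀ g : ℝ → EuclideanSpace ℝ (Fin n),
        (∀ t ∈ I, α t = g (β.lengthFun t)) → Set.EqOn g αs (β.lengthFun '' I) :=
  exists_unique_f_representation_general D f hfib β hβ I hI hIint α hα hαD hsub
end

section
/- Let D ⊂ ℝⁿ be a domain, f: D → ℝⁿ continuous, and let α: [a,b] → D be a closed curve such that β = f∘α is rectifiable of length c, and f winds α m times around itself, with β⁰: [0,c] → ℝⁿ the normal representation of β and α*: [0,c] → D the f-representation of α with respect to β, h = c/m. Let B₀ ⊂ D and ρ*: D → [0,∞] be Borel with ρ* = 0 on B₀, and define ρ̃(y) = (1/m)·χ_{f(D∖B₀)}(y)·sup_C Σ_{x∈C} ρ*(x), the supremum over all subsets C of f⁻¹(y) ∩ (D∖B₀) with card C ≤ m. Then for a.e. t ∈ (0,h), the points α*(t), α*(t+h), …, α*(t+(m−1)h) are m distinct points of f⁻¹(β⁰(t)), and hence ρ̃(β⁰(t)) ≥ (1/m)·Σ_{j=0}^{m−1} ρ*(α*(t+jh)) whenever β⁰(t) ∉ f(B₀). -/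
open MeasureTheory ENNReal Set

/-! The winding hypothesis already holds at every `t ∈ (0, h)`: all shifts `t + jh`, `j < m`,
stay in `[0, c)`, so applying it at `t + ih` with shift `j - i` shows that the points
`α*(t + jh)` lie in the single fiber `f⁻¹(β⁰(t))` and are pairwise distinct. Off `f(B₀)` they
avoid `B₀`, so they form an admissible set `C` in the supremum defining `ρ̃`. -/

section ShiftedOrbit

variable {X : Type*} {g : ℝ → X} {c h t : ℝ} {m : ℕ}

lemma add_nat_mul_lt_of_lt_div (ht0 : 0 ≤ t) (ht : t < c / m) {j : ℕ} (hj : j < m) :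
    t + j * (c / m) < c := by
  have hm : (0 : ℝ) < m := by exact_mod_cast (Nat.zero_le j).trans_lt hj
  have hj' : (j : ℝ) + 1 ≤ m := by exact_mod_cast hj
  have hmc : (m : ℝ) * (c / m) = c := mul_div_cancel₀ c hm.ne'
  nlinarith

lemma rel_apply_add_nat_mul {R : X → X → Prop}
    (hshift : ∀ (s : ℝ) (k : ℕ), 0 ≤ s → 1 ≤ k → k ≤ m - 1 → s + k * h < c →
      R (g (s + k * h)) (g s))
    (ht : 0 ≤ t) (hh : 0 ≤ h) {i j : ℕ} (hij : i < j) (hj : j < m) (hlt : t + j * h < c) :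
    R (g (t + j * h)) (g (t + i * h)) := by
  have hshift_eq : t + i * h + ((j - i : ℕ) : ℝ) * h = t + j * h := by
    rw [Nat.cast_sub hij.le]; ring
  have := hshift (t + i * h) (j - i) (by positivity) (by omega) (by omega) (hshift_eq ▸ hlt)
  rwa [hshift_eq] at this

lemma injOn_apply_add_nat_mul
    (hsep : ∀ (s : ℝ) (k : ℕ), 0 ≤ s → 1 ≤ k → k ≤ m - 1 → s + k * h < c →
      g (s + k * h) ≠ g s)
    (ht : 0 ≤ t) (hh : 0 ≤ h) (hlt : ∀ j < m, t + j * h < c) :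
    Set.InjOn (fun j : ℕ => g (t + j * h)) (Set.Iio m) := by
  intro i hi j hj hgij
  by_contra hne
  rcases lt_or_gt_of_ne hne with hij | hji
  · exact rel_apply_add_nat_mul hsep ht hh hij hj (hlt j hj) hgij.symm
  · exact rel_apply_add_nat_mul hsep ht hh hji hi (hlt i hi) hgij

end ShiftedOrbit

lemma sum_comp_le_iSup_finset {ι X M : Type*} [AddCommMonoid M] [CompleteLattice M]
    {P : X → Prop} (ρ : X → M) {s : Finset ι} {g : ι → X} (hg : Set.InjOn g s)
    (hP : ∀ i ∈ s, P (g i)) :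
    ∑ i ∈ s, ρ (g i) ≤
      ⨆ (C : Finset X) (_ : ∀ x ∈ C, P x) (_ : C.card ≤ s.card), ∑ x ∈ C, ρ x := by
  classical
  calc ∑ i ∈ s, ρ (g i) = ∑ x ∈ s.image g, ρ x := (Finset.sum_image hg).symm
    _ ≤ _ := le_iSup₂_of_le (s.image g) (by simpa using hP)
        (le_iSup_of_le (f := fun _ : (s.image g).card ≤ s.card => ∑ x ∈ s.image g, ρ x)
          Finset.card_image_le le_rfl)

theorem distinct_preimages_and_sup_estimate_general
    {n : ℕ} (D : Set (EuclideanSpace ℝ (Fin n)))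
    (f : EuclideanSpace ℝ (Fin n) → EuclideanSpace ℝ (Fin n))
    (m : ℕ)
    (β : Curve n)
    (αs : ℝ → EuclideanSpace ℝ (Fin n))
    (hαsD : ∀ t ∈ Set.Icc (0 : ℝ) β.length, αs t ∈ D)
    (hαsf : ∀ t ∈ Set.Icc (0 : ℝ) β.length, f (αs t) = β.normalRep t)
    (hwind : ∀ (t : ℝ) (j : ℕ), 0 ≤ t → 1 ≤ j → j ≤ m - 1 →
      t + j * (β.length / m) < β.length →
      β.normalRep (t + j * (β.length / m)) = β.normalRep t ∧
      αs (t + j * (β.length / m)) ≠ αs t)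
    (B₀ : Set (EuclideanSpace ℝ (Fin n)))
    (ρstar : EuclideanSpace ℝ (Fin n) → ℝ≥0∞)
    (ρt : EuclideanSpace ℝ (Fin n) → ℝ≥0∞)
    (hρt : ∀ y, ρt y = (m : ℝ≥0∞)⁻¹ *
      Set.indicator (f '' (D \ B₀))
        (fun y' => ⨆ (C : Finset (EuclideanSpace ℝ (Fin n)))
          (_ : ∀ x ∈ C, x ∈ D \ B₀ ∧ f x = y') (_ : C.card ≤ m), ∑ x ∈ C, ρstar x) y) :
    ∀ᵐ t ∂(volume.restrict (Set.Ioo (0 : ℝ) (β.length / m))),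
      (∀ j < m, f (αs (t + j * (β.length / m))) = β.normalRep t) ∧
      (∀ i < m, ∀ j < m, i ≠ j →
        αs (t + i * (β.length / m)) ≠ αs (t + j * (β.length / m))) ∧
      (β.normalRep t ∉ f '' B₀ →
        (m : ℝ≥0∞)⁻¹ * ∑ j ∈ Finset.range m, ρstar (αs (t + j * (β.length / m))) ≤
          ρt (β.normalRep t)) := by
  filter_upwards [ae_restrict_mem measurableSet_Ioo] with t ⟨ht0, hth⟩
  set h := β.length / m
  have hh : 0 < h := ht0.trans hth
  have hlt : ∀ j < m, t + j * h < β.length := fun j hj => add_nat_mul_lt_of_lt_div ht0.le hth hj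
  have hmem : ∀ j < m, t + j * h ∈ Set.Icc 0 β.length :=
    fun j hj => ⟨by positivity, (hlt j hj).le⟩
  have hfiber : ∀ j < m, f (αs (t + j * h)) = β.normalRep t := by
    intro j hj
    rw [hαsf _ (hmem j hj)]
    rcases j.eq_zero_or_pos with rfl | hj0
    · simp
    · simpa using rel_apply_add_nat_mul (fun s k h0 h1 h2 h3 => (hwind s k h0 h1 h2 h3).1)
        ht0.le hh.le hj0 hj (hlt j hj)
  have hinj : Set.InjOn (fun j : ℕ => αs (t + j * h)) (Set.Iio m) :=
    injOn_apply_add_nat_mul (fun s k h0 h1 h2 h3 => (hwind s k h0 h1 h2 h3).2) ht0.le hh.le hlt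
  refine ⟨hfiber, fun i hi j hj hij => hinj.ne hi hj hij, fun hB₀ => ?_⟩
  have hgood : ∀ j < m, αs (t + j * h) ∈ D \ B₀ ∧ f (αs (t + j * h)) = β.normalRep t :=
    fun j hj => ⟨⟨hαsD _ (hmem j hj), fun hB => hB₀ ⟨_, hB, hfiber j hj⟩⟩, hfiber j hj⟩
  have hm : 0 < m := Nat.pos_of_ne_zero fun hm => by simp [h, hm] at hh
  have hy : β.normalRep t ∈ f '' (D \ B₀) := ⟨_, (hgood 0 hm).1, (hgood 0 hm).2⟩
  rw [hρt, Set.indicator_of_mem hy]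
  gcongr
  simpa only [Finset.card_range] using
    sum_comp_le_iSup_finset ρstar (s := Finset.range m) (by rwa [Finset.coe_range])
      (fun j hj => hgood j (Finset.mem_range.mp hj))

/-- **Distinct preimages along a wound curve and the key estimate (formula (4)).** Let `f` be
continuous on the domain `D`, `α` a closed curve in `D` with `β = f ∘ α` rectifiable of length
`c`, wound `m` times by `f`, with normal representation `β⁰` and `f`-representation `α*`,
`h = c/m`. Let `ρ* : D → [0, ∞]` be Borel vanishing on `B₀ ⊆ D`, and
`ρ̃(y) = (1/m) · χ_{f(D∖B₀)}(y) · sup_C Σ_{x ∈ C} ρ*(x)` over `C ⊆ f⁻¹(y) ∩ (D∖B₀)`,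
`card C ≤ m`. Then for a.e. `t ∈ (0, h)` the points `α*(t), α*(t+h), …, α*(t+(m−1)h)` are `m`
distinct points of `f⁻¹(β⁰(t))`, and hence
`ρ̃(β⁰(t)) ≥ (1/m) Σ_{j=0}^{m−1} ρ*(α*(t+jh))` whenever `β⁰(t) ∉ f(B₀)`. -/
theorem distinct_preimages_and_sup_estimate
    {n : ℕ} (D : Set (EuclideanSpace ℝ (Fin n)))
    (hDopen : IsOpen D) (hDconn : IsConnected D)
    (f : EuclideanSpace ℝ (Fin n) → EuclideanSpace ℝ (Fin n)) (hf : ContinuousOn f D)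
    (α : Curve n) (hαD : α.InSet D) (m : ℕ) (hm : 0 < m)
    (β : Curve n) (hba : β.a = α.a) (hbb : β.b = α.b)
    (hβf : ∀ t ∈ Set.Icc α.a α.b, β.toFun t = f (α.toFun t)) (hrect : β.Rectifiable)
    (αs : ℝ → EuclideanSpace ℝ (Fin n))
    (hrep : ∀ t ∈ Set.Icc α.a α.b, α.toFun t = αs (β.lengthFun t))
    (hαsD : ∀ t ∈ Set.Icc (0 : ℝ) β.length, αs t ∈ D)
    (hαsf : ∀ t ∈ Set.Icc (0 : ℝ) β.length, f (αs t) = β.normalRep t)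
    (hwind : ∀ (t : ℝ) (j : ℕ), 0 ≤ t → 1 ≤ j → j ≤ m - 1 →
      t + j * (β.length / m) < β.length →
      β.normalRep (t + j * (β.length / m)) = β.normalRep t ∧
      αs (t + j * (β.length / m)) ≠ αs t)
    (B₀ : Set (EuclideanSpace ℝ (Fin n))) (hB₀ : B₀ ⊆ D)
    (ρstar : EuclideanSpace ℝ (Fin n) → ℝ≥0∞) (hρmeas : Measurable ρstar)
    (hvan : ∀ x ∈ B₀, ρstar x = 0)
    (ρt : EuclideanSpace ℝ (Fin n) → ℝ≥0∞)
    (hρt : ∀ y, ρt y = (m : ℝ≥0∞)⁻¹ *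
      Set.indicator (f '' (D \ B₀))
        (fun y' => ⨆ (C : Finset (EuclideanSpace ℝ (Fin n)))
          (_ : ∀ x ∈ C, x ∈ D \ B₀ ∧ f x = y') (_ : C.card ≤ m), ∑ x ∈ C, ρstar x) y) :
    ∀ᵐ t ∂(volume.restrict (Set.Ioo (0 : ℝ) (β.length / m))),
      (∀ j < m, f (αs (t + j * (β.length / m))) = β.normalRep t) ∧
      (∀ i < m, ∀ j < m, i ≠ j →
        αs (t + i * (β.length / m)) ≠ αs (t + j * (β.length / m))) ∧
      (β.normalRep t ∉ f '' B₀ →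
        (m : ℝ≥0∞)⁻¹ * ∑ j ∈ Finset.range m, ρstar (αs (t + j * (β.length / m))) ≤
          ρt (β.normalRep t)) :=
  distinct_preimages_and_sup_estimate_general D f m β αs hαsD hαsf hwind B₀ ρstar ρt hρt
end
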